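/- For a bipartite pure state, the entanglement of purification equals its entanglement entropy: if ρ = |φ⟩⟨φ| for a unit vector |φ⟩ ∈ H_A ⊗ H_B, then E_p(ρ) = E(φ) = S(Tr_A |φ⟩⟨φ|), and the optimal purification is the pure state itself (trivial ancillas). -/

import Mathlib

/-!
Write `vₖ` for the slices of a purification `ψ` at the ancilla indices `k`. Tracing out the
ancillas gives `|φ⟩⟨φ| = ∑ₖ |vₖ⟩⟨vₖ|`. Evaluating the quadratic forms of both sides at
`w = vₖ - ⟨φ, vₖ⟩ φ`, which is orthogonal to `φ`, gives `‖w‖² = ⟨w, vₖ⟩ = 0`, so every `vₖ` is a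
multiple of `φ` and `ψ = φ ⊗ c` is a product state. Its reduced state on `BB'` is `σ_B ⊗ τ_B'`,
and `S(σ_B ⊗ τ_B') = S(σ_B) + S(τ_B') ≥ S(σ_B)`, with equality for trivial ancillas, where
`τ_B'` is a `1 × 1` state.
-/

noncomputable section
open scoped BigOperators Kronecker Matrix ComplexOrder
open Matrix

namespace QIT

def IsDensity {n : Type*} [Fintype n] [DecidableEq n] (ρ : Matrix n n ℂ) : Prop :=
  ρ.PosSemidef ∧ ρ.trace = 1

noncomputable def vN {n : Type*} [Fintype n] [DecidableEq n] (ρ : Matrix n n ℂ) : ℝ :=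
  if h : ρ.IsHermitian then ∑ i, -(h.eigenvalues i * Real.logb 2 (h.eigenvalues i)) else 0

def proj {n : Type*} (ψ : n → ℂ) : Matrix n n ℂ :=
  Matrix.of fun x y => ψ x * (starRingEnd ℂ) (ψ y)

def ptraceL {a b : Type*} [Fintype a] (ρ : Matrix (a × b) (a × b) ℂ) : Matrix b b ℂ :=
  Matrix.of fun i j => ∑ k, ρ (k, i) (k, j)

def ptraceR {a b : Type*} [Fintype b] (ρ : Matrix (a × b) (a × b) ℂ) : Matrix a a ℂ :=
  Matrix.of fun i j => ∑ k, ρ (i, k) (j, k)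

noncomputable def ent {X Y : Type*} [Fintype X] [Fintype Y] [DecidableEq Y]
    (ψ : X × Y → ℂ) : ℝ :=
  vN (ptraceL (proj ψ))

def IsPurification {A B : Type*} [Fintype A] [Fintype B] {dA' dB' : ℕ}
    (ρ : Matrix (A × B) (A × B) ℂ)
    (ψ : (A × Fin dA') × (B × Fin dB') → ℂ) : Prop :=
  (∑ x, ‖ψ x‖ ^ 2 = 1) ∧
  ∀ a b a' b', ρ (a, b) (a', b') =
    ∑ a2 : Fin dA', ∑ b2 : Fin dB',
      ψ ((a, a2), (b, b2)) * (starRingEnd ℂ) (ψ ((a', a2), (b', b2)))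

noncomputable def Ep {A B : Type*} [Fintype A] [Fintype B] [DecidableEq A] [DecidableEq B]
    (ρ : Matrix (A × B) (A × B) ℂ) : ℝ :=
  sInf { e : ℝ | ∃ (dA' dB' : ℕ) (ψ : (A × Fin dA') × (B × Fin dB') → ℂ),
    IsPurification ρ ψ ∧ e = ent ψ }

noncomputable def Iq {A B : Type*} [Fintype A] [Fintype B] [DecidableEq A] [DecidableEq B]
    (ρ : Matrix (A × B) (A × B) ℂ) : ℝ :=
  vN (ptraceR ρ) + vN (ptraceL ρ) - vN ρ

open Classical in
noncomputable def msqrt {n : Type*} [Fintype n] [DecidableEq n] (M : Matrix n n ℂ) : Matrix n n ℂ :=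
  if h : M.PosSemidef then h.1.eigenvectorUnitary.1 * diagonal ((↑) ∘ (√·) ∘ h.1.eigenvalues) *
    (star h.1.eigenvectorUnitary : Matrix n n ℂ) else 0

noncomputable def fid {n : Type*} [Fintype n] [DecidableEq n] (ρ σ : Matrix n n ℂ) : ℝ :=
  ((msqrt (msqrt ρ * σ * msqrt ρ)).trace).re

noncomputable def bures {n : Type*} [Fintype n] [DecidableEq n] (ρ σ : Matrix n n ℂ) : ℝ :=
  2 * Real.sqrt (1 - fid ρ σ)

noncomputable def traceNorm {n : Type*} [Fintype n] [DecidableEq n] (X : Matrix n n ℂ) : ℝ :=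
  ((msqrt (Xᴴ * X)).trace).re

def IsPOVM {n : Type*} [Fintype n] [DecidableEq n] {k : ℕ} (M : Fin k → Matrix n n ℂ) : Prop :=
  (∀ i, (M i).PosSemidef) ∧ ∑ i, M i = 1

noncomputable def shannon {k : Type*} [Fintype k] (p : k → ℝ) : ℝ :=
  ∑ i, -(p i * Real.logb 2 (p i))

noncomputable def miJoint {k l : Type*} [Fintype k] [Fintype l] (p : k × l → ℝ) : ℝ :=
  shannon (fun i => ∑ j, p (i, j)) + shannon (fun j => ∑ i, p (i, j)) - shannon p

noncomputable def Ic {A B : Type*} [Fintype A] [Fintype B] [DecidableEq A] [DecidableEq B]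
    (ρ : Matrix (A × B) (A × B) ℂ) : ℝ :=
  sSup { e : ℝ | ∃ (k l : ℕ) (MA : Fin k → Matrix A A ℂ) (MB : Fin l → Matrix B B ℂ),
    IsPOVM MA ∧ IsPOVM MB ∧
    e = miJoint (fun ij : Fin k × Fin l => (((MA ij.1 ⊗ₖ MB ij.2) * ρ).trace).re) }

noncomputable def probOf {A B : Type*} [Fintype A] [Fintype B] [DecidableEq A] [DecidableEq B]
    (M : Matrix A A ℂ) (ρ : Matrix (A × B) (A × B) ℂ) : ℝ :=
  (((M ⊗ₖ (1 : Matrix B B ℂ)) * ρ).trace).re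

noncomputable def postB {A B : Type*} [Fintype A] [Fintype B] [DecidableEq A] [DecidableEq B]
    (M : Matrix A A ℂ) (ρ : Matrix (A × B) (A × B) ℂ) : Matrix B B ℂ :=
  ((probOf M ρ : ℂ))⁻¹ • ptraceL ((M ⊗ₖ (1 : Matrix B B ℂ)) * ρ)

noncomputable def CA {A B : Type*} [Fintype A] [Fintype B] [DecidableEq A] [DecidableEq B]
    (ρ : Matrix (A × B) (A × B) ℂ) : ℝ :=
  sSup { c : ℝ | ∃ (k : ℕ) (M : Fin k → Matrix A A ℂ), IsPOVM M ∧
    c = vN (∑ i, (probOf (M i) ρ : ℂ) • postB (M i) ρ)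
        - ∑ i, probOf (M i) ρ * vN (postB (M i) ρ) }

noncomputable def pauli : Fin 4 → Matrix (Fin 2) (Fin 2) ℂ :=
  ![1, !![0, 1; 1, 0], !![0, -Complex.I; Complex.I, 0], !![1, 0; 0, -1]]

noncomputable def bell0 : Fin 2 × Fin 2 → ℂ :=
  fun x => if x.1 = x.2 then ((Real.sqrt 2)⁻¹ : ℝ) else 0

noncomputable def bell (i : Fin 4) : Fin 2 × Fin 2 → ℂ :=
  fun x => ∑ j, pauli i x.2 j * bell0 (x.1, j)

noncomputable def binEnt (x : ℝ) : ℝ :=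
  -(x * Real.logb 2 x) - (1 - x) * Real.logb 2 (1 - x)

noncomputable def pauliChannel (p : Fin 4 → ℝ) (X : Matrix (Fin 2) (Fin 2) ℂ) :
    Matrix (Fin 2) (Fin 2) ℂ :=
  ∑ i, (p i : ℂ) • (pauli i * X * pauli i)

noncomputable def holevoCap (Λ : Matrix (Fin 2) (Fin 2) ℂ → Matrix (Fin 2) (Fin 2) ℂ) : ℝ :=
  sSup { c : ℝ | ∃ (k : ℕ) (q : Fin k → ℝ) (ρs : Fin k → Matrix (Fin 2) (Fin 2) ℂ),
    (∀ i, 0 ≤ q i) ∧ (∑ i, q i = 1) ∧ (∀ i, IsDensity (ρs i)) ∧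
    c = vN (∑ i, (q i : ℂ) • Λ (ρs i)) - ∑ i, q i * vN (Λ (ρs i)) }

def tensPow {A B : Type*} [Fintype A] [Fintype B]
    (ρ : Matrix (A × B) (A × B) ℂ) (n : ℕ) :
    Matrix ((Fin n → A) × (Fin n → B)) ((Fin n → A) × (Fin n → B)) ℂ :=
  Matrix.of fun x y => ∏ t, ρ (x.1 t, x.2 t) (y.1 t, y.2 t)

open Polynomial

section PureStates

variable {n : Type*} [Fintype n]

lemma star_dotProduct_self_eq (v : n → ℂ) : star v ⬝ᵥ v = ((∑ i, ‖v i‖ ^ 2 : ℝ) : ℂ) := by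
  simp [dotProduct, Complex.conj_mul']

lemma star_dotProduct_proj_mulVec (u w : n → ℂ) :
    star w ⬝ᵥ (proj u *ᵥ w) = ((‖star w ⬝ᵥ u‖ ^ 2 : ℝ) : ℂ) := by
  rw [show proj u = vecMulVec u (star u) from rfl, vecMulVec_mulVec, star_dotProduct u]
  push_cast
  rw [← Complex.conj_mul']
  simp [dotProduct_smul]

lemma norm_sq_star_dotProduct_eq_sum {κ : Type*} [Fintype κ] {φ : n → ℂ} {v : κ → n → ℂ}
    (h : proj φ = ∑ k, proj (v k)) (w : n → ℂ) :
    ‖star w ⬝ᵥ φ‖ ^ 2 = ∑ k, ‖star w ⬝ᵥ v k‖ ^ 2 := by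
  have := congrArg (fun M => star w ⬝ᵥ (M *ᵥ w)) h
  simp only [sum_mulVec, dotProduct_sum, star_dotProduct_proj_mulVec] at this
  exact_mod_cast this

lemma eq_smul_of_proj_eq_sum {κ : Type*} [Fintype κ] {φ : n → ℂ} {v : κ → n → ℂ}
    (hφ : star φ ⬝ᵥ φ = 1) (h : proj φ = ∑ k, proj (v k)) (k : κ) :
    v k = (star φ ⬝ᵥ v k) • φ := by
  set c := star φ ⬝ᵥ v k
  set w := v k - c • φ
  have hwφ : star w ⬝ᵥ φ = 0 := by
    simp [w, c, sub_dotProduct, smul_dotProduct, hφ, star_dotProduct (v k)]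
  have hwv : star w ⬝ᵥ v k = 0 := by
    have hsum := norm_sq_star_dotProduct_eq_sum h w
    rw [hwφ, norm_zero, zero_pow two_ne_zero, eq_comm,
      Finset.sum_eq_zero_iff_of_nonneg fun _ _ => by positivity] at hsum
    simpa using hsum k (Finset.mem_univ k)
  have hww : star w ⬝ᵥ w = 0 := by
    rw [show star w ⬝ᵥ w = star w ⬝ᵥ v k - c * (star w ⬝ᵥ φ) by
      rw [← smul_eq_mul, ← dotProduct_smul, ← dotProduct_sub], hwv, hwφ, mul_zero, sub_zero]
  exact sub_eq_zero.mp (dotProduct_star_self_eq_zero.mp hww)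

end PureStates

section Purification

variable {A B : Type*} [Fintype A] [Fintype B] {dA' dB' : ℕ} {φ : A × B → ℂ}
  {ψ : (A × Fin dA') × (B × Fin dB') → ℂ}

lemma IsPurification.proj_eq_sum (hψ : IsPurification (proj φ) ψ) :
    proj φ = ∑ k : Fin dA' × Fin dB', proj fun y : A × B => ψ ((y.1, k.1), (y.2, k.2)) := by
  ext ⟨a, b⟩ ⟨a', b'⟩
  rw [hψ.2, Matrix.sum_apply, Fintype.sum_prod_type]
  rfl

lemma IsPurification.exists_eq_mul (hφ : ∑ x, ‖φ x‖ ^ 2 = 1)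
    (hψ : IsPurification (proj φ) ψ) :
    ∃ c : Fin dA' × Fin dB' → ℂ, ∑ k, ‖c k‖ ^ 2 = 1 ∧
      ψ = fun x => φ (x.1.1, x.2.1) * c (x.1.2, x.2.2) := by
  have hφ' : star φ ⬝ᵥ φ = 1 := by rw [star_dotProduct_self_eq, hφ, Complex.ofReal_one]
  have hsum := hψ.proj_eq_sum
  refine ⟨fun k => star φ ⬝ᵥ fun y => ψ ((y.1, k.1), (y.2, k.2)), ?_, ?_⟩
  · simpa [hφ'] using (norm_sq_star_dotProduct_eq_sum hsum φ).symm
  · funext ⟨⟨a, a₂⟩, ⟨b, b₂⟩⟩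
    exact (congrFun (eq_smul_of_proj_eq_sum hφ' hsum (a₂, b₂)) (a, b)).trans (mul_comm _ _)

end Purification

section Entropy

lemma neg_mul_logb_mul (x y : ℝ) :
    -(x * y * Real.logb 2 (x * y)) = y * -(x * Real.logb 2 x) + x * -(y * Real.logb 2 y) := by
  have h := Real.negMulLog_mul x y
  simp only [Real.negMulLog] at h
  simp only [Real.logb]
  field_simp
  linarith

lemma charpoly_unitary_conj {R n : Type*} [CommRing R] [StarRing R] [Fintype n] [DecidableEq n]
    {U : Matrix n n R} (hU : U ∈ unitary (Matrix n n R)) (D : Matrix n n R) :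
    (U * D * star U).charpoly = D.charpoly := by
  rw [charpoly_mul_comm, ← mul_assoc, Unitary.star_mul_self_of_mem hU, one_mul]

variable {n m : Type*} [Fintype n] [DecidableEq n] [Fintype m] [DecidableEq m]

lemma vN_of_isHermitian {ρ : Matrix n n ℂ} (hρ : ρ.IsHermitian) :
    vN ρ = ∑ i, -(hρ.eigenvalues i * Real.logb 2 (hρ.eigenvalues i)) :=
  dif_pos hρ

lemma vN_eq_of_charpoly_eq {ρ : Matrix n n ℂ} (hρ : ρ.IsHermitian) {f : n → ℝ}
    (h : ρ.charpoly = ∏ i, (X - C (f i : ℂ))) :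
    vN ρ = ∑ i, -(f i * Real.logb 2 (f i)) := by
  have hroots : Finset.univ.val.map hρ.eigenvalues = Finset.univ.val.map f := by
    apply Multiset.map_injective Complex.ofReal_injective
    rw [Multiset.map_map, Multiset.map_map, ← RCLike.ofReal_eq_complex_ofReal,
      ← hρ.roots_charpoly_eq_eigenvalues, h,
      roots_prod _ _ (by simp [Finset.prod_ne_zero_iff, X_sub_C_ne_zero])]
    simp
  rw [vN_of_isHermitian hρ]
  simpa [Multiset.map_map] using
    congrArg (fun s => (s.map fun x => -(x * Real.logb 2 x)).sum) hroots

lemma IsDensity.sum_eigenvalues {ρ : Matrix n n ℂ} (hρ : IsDensity ρ) :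
    ∑ i, hρ.1.1.eigenvalues i = 1 := by
  have h := hρ.1.1.trace_eq_sum_eigenvalues.symm.trans hρ.2
  rw [← RCLike.ofReal_sum] at h
  exact RCLike.ofReal_injective (h.trans RCLike.ofReal_one.symm)

lemma vN_nonneg {ρ : Matrix n n ℂ} (hρ : IsDensity ρ) : 0 ≤ vN ρ := by
  rw [vN_of_isHermitian hρ.1.1]
  refine Finset.sum_nonneg fun i _ => ?_
  have h0 : ∀ j, 0 ≤ hρ.1.1.eigenvalues j := hρ.1.eigenvalues_nonneg
  have h1 : hρ.1.1.eigenvalues i ≤ 1 :=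
    hρ.sum_eigenvalues ▸ Finset.single_le_sum (fun j _ => h0 j) (Finset.mem_univ i)
  simpa [Real.negMulLog, Real.logb, neg_div, mul_div_assoc] using
    div_nonneg (Real.negMulLog_nonneg (h0 i) h1) (Real.log_nonneg one_le_two)

lemma vN_eq_zero_of_subsingleton [Subsingleton n] {ρ : Matrix n n ℂ} (hρ : IsDensity ρ) :
    vN ρ = 0 := by
  have h1 : ∀ i, hρ.1.1.eigenvalues i = 1 := fun i =>
    (Fintype.sum_subsingleton _ i).symm.trans hρ.sum_eigenvalues
  simp [vN_of_isHermitian hρ.1.1, h1]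

lemma vN_kronecker {σ : Matrix n n ℂ} {τ : Matrix m m ℂ} (hσ : IsDensity σ) (hτ : IsDensity τ) :
    vN (σ ⊗ₖ τ) = vN σ + vN τ := by
  rw [vN_of_isHermitian hσ.1.1, vN_of_isHermitian hτ.1.1]
  set U := hσ.1.1.eigenvectorUnitary
  set V := hτ.1.1.eigenvectorUnitary
  set μ := hσ.1.1.eigenvalues
  set ν := hτ.1.1.eigenvalues
  have hμ : ∑ i, μ i = 1 := hσ.sum_eigenvalues
  have hν : ∑ j, ν j = 1 := hτ.sum_eigenvalues
  have hdecomp : σ ⊗ₖ τ = ((U : Matrix n n ℂ) ⊗ₖ (V : Matrix m m ℂ)) *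
      diagonal (fun p => ((μ p.1 * ν p.2 : ℝ) : ℂ)) *
      star ((U : Matrix n n ℂ) ⊗ₖ (V : Matrix m m ℂ)) := by
    conv_lhs => rw [hσ.1.1.spectral_theorem, hτ.1.1.spectral_theorem]
    simp [Unitary.conjStarAlgAut_apply, mul_kronecker_mul, diagonal_kronecker_diagonal,
      star_eq_conjTranspose, conjTranspose_kronecker, μ, ν, U, V]
  have hcharpoly : (σ ⊗ₖ τ).charpoly = ∏ p : n × m, (X - C ((μ p.1 * ν p.2 : ℝ) : ℂ)) := by
    rw [hdecomp, charpoly_unitary_conj (kronecker_mem_unitary U.2 V.2), charpoly_diagonal]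
  rw [vN_eq_of_charpoly_eq (hσ.1.kronecker hτ.1).1 hcharpoly, Fintype.sum_prod_type]
  simp only [neg_mul_logb_mul, Finset.sum_add_distrib, ← Finset.sum_mul, ← Finset.mul_sum, hμ, hν,
    one_mul]

end Entropy

section PartialTrace

variable {A B A' B' : Type*} [Fintype A] [Fintype A']

lemma isDensity_ptraceL_proj [Fintype B] [DecidableEq B] {ψ : A × B → ℂ}
    (hψ : ∑ x, ‖ψ x‖ ^ 2 = 1) : IsDensity (ptraceL (proj ψ)) := by
  constructor
  · have : ptraceL (proj ψ) =
        (of fun k j => star (ψ (k, j)))ᴴ * of fun k j => star (ψ (k, j)) := by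
      ext i j
      simp [ptraceL, proj, mul_apply]
    rw [this]
    exact posSemidef_conjTranspose_mul_self _
  · rw [← Complex.ofReal_one, ← hψ, Fintype.sum_prod_type, Finset.sum_comm]
    simp [trace, ptraceL, proj, Complex.mul_conj']

lemma ptraceL_proj_mul (φ : A × B → ℂ) (c : A' × B' → ℂ) :
    ptraceL (proj fun x : (A × A') × (B × B') => φ (x.1.1, x.2.1) * c (x.1.2, x.2.2)) =
      ptraceL (proj φ) ⊗ₖ ptraceL (proj c) := by
  ext ⟨b, b₂⟩ ⟨b', b₂'⟩
  simp [ptraceL, proj, Fintype.sum_prod_type, Finset.sum_mul_sum, mul_mul_mul_comm]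

lemma ent_mul [Fintype B] [DecidableEq B] [Fintype B'] [DecidableEq B'] {φ : A × B → ℂ}
    {c : A' × B' → ℂ} (hφ : ∑ x, ‖φ x‖ ^ 2 = 1) (hc : ∑ x, ‖c x‖ ^ 2 = 1) :
    ent (fun x : (A × A') × (B × B') => φ (x.1.1, x.2.1) * c (x.1.2, x.2.2)) = ent φ + ent c := by
  rw [ent, ptraceL_proj_mul, vN_kronecker (isDensity_ptraceL_proj hφ) (isDensity_ptraceL_proj hc)]
  rfl

end PartialTrace

section EntanglementOfPurification

variable {A B : Type*} [Fintype A] [Fintype B] {φ : A × B → ℂ}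

lemma ent_le_of_isPurification [DecidableEq B] (hφ : ∑ x, ‖φ x‖ ^ 2 = 1) {dA' dB' : ℕ}
    {ψ : (A × Fin dA') × (B × Fin dB') → ℂ} (hψ : IsPurification (proj φ) ψ) :
    ent φ ≤ ent ψ := by
  obtain ⟨c, hc, rfl⟩ := hψ.exists_eq_mul hφ
  rw [ent_mul hφ hc]
  exact le_add_of_nonneg_right (vN_nonneg (isDensity_ptraceL_proj hc))

lemma isPurification_trivial (hφ : ∑ x, ‖φ x‖ ^ 2 = 1) :
    IsPurification (dA' := 1) (dB' := 1) (proj φ) fun x => φ (x.1.1, x.2.1) :=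
  ⟨by simpa [Fintype.sum_prod_type] using hφ, fun a b a' b' => by simp [proj]⟩

lemma ent_trivial_ancilla [DecidableEq B] (hφ : ∑ x, ‖φ x‖ ^ 2 = 1) :
    ent (fun x : (A × Fin 1) × (B × Fin 1) => φ (x.1.1, x.2.1)) = ent φ := by
  have hc : ∑ k : Fin 1 × Fin 1, ‖(1 : Fin 1 × Fin 1 → ℂ) k‖ ^ 2 = 1 := by simp
  have h := ent_mul hφ hc
  simp only [Pi.one_apply, mul_one] at h
  rw [h, add_eq_left]
  exact vN_eq_zero_of_subsingleton (isDensity_ptraceL_proj hc)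

end EntanglementOfPurification

/-- For a bipartite pure state, the entanglement of purification equals its
entanglement entropy, and the optimal purification is the pure state itself
(trivial ancillas). -/
theorem stmt0 {dA dB : ℕ} (φ : Fin dA × Fin dB → ℂ)
    (hφ : ∑ x, ‖φ x‖ ^ 2 = 1) :
    Ep (proj φ) = ent φ ∧
    IsPurification (dA' := 1) (dB' := 1) (proj φ)
      (fun x => φ (x.1.1, x.2.1)) ∧
    ent (fun x : (Fin dA × Fin 1) × (Fin dB × Fin 1) => φ (x.1.1, x.2.1)) = ent φ := by
  have hpur := isPurification_trivial hφ
  have htriv := ent_trivial_ancilla hφ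
  refine ⟨IsLeast.csInf_eq ⟨⟨1, 1, _, hpur, htriv.symm⟩, ?_⟩, hpur, htriv⟩
  rintro e ⟨dA', dB', ψ, hψ, rfl⟩
  exact ent_le_of_isPurification hφ hψ

end QIT
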